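/- Let f : A → A′ and g : B → B′ be L-homomorphisms of join-semilattices with zero. For a bi-ideal I of A × B, let h(I) = ∇_{A′,B′} ∪ { ⟨u,v⟩ ∈ A′ × B′ : u ≤ f(x) and v ≤ g(y) for some ⟨x,y⟩ ∈ I }. Then h(I) is a bi-ideal of A′ × B′. -/

import Mathlib

/-!
Only the lateral joins need an argument. If `(a₀, b)` and `(a₁, b)` lie under `(f x₀, g y₀)` and
`(f x₁, g y₁)` with `(xᵢ, yᵢ) ∈ I`, the L-condition on `g` gives `y ≤ y₀, y₁` with `b ≤ g y`;
shrinking both witnesses to second coordinate `y` and joining them in `I` gives `(x₀ ⊔ x₁, y) ∈ I`,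
which covers `(a₀ ⊔ a₁, b)` because `f` is monotone. Joins in the second coordinate are the same
statement after swapping the factors.
-/

variable {A B : Type*} [SemilatticeSup A] [OrderBot A] [SemilatticeSup B] [OrderBot B]

/-- A bi-ideal of `A × B`: a downward closed subset containing
`∇ = (A × {0}) ∪ ({0} × B)` that is closed under lateral joins. -/
def IsBiIdeal (I : Set (A × B)) : Prop :=
  (∀ ⦃p q : A × B⦄, q ≤ p → p ∈ I → q ∈ I) ∧
  (∀ a : A, (a, (⊥ : B)) ∈ I) ∧
  (∀ b : B, ((⊥ : A), b) ∈ I) ∧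
  (∀ a₀ a₁ : A, ∀ b : B, (a₀, b) ∈ I → (a₁, b) ∈ I → (a₀ ⊔ a₁, b) ∈ I) ∧
  (∀ a : A, ∀ b₀ b₁ : B, (a, b₀) ∈ I → (a, b₁) ∈ I → (a, b₀ ⊔ b₁) ∈ I)

/-- `∇ = (A × {0}) ∪ ({0} × B)`, the least bi-ideal. -/
def nabla (A B : Type*) [SemilatticeSup A] [OrderBot A] [SemilatticeSup B] [OrderBot B] :
    Set (A × B) := {p | p.1 = ⊥ ∨ p.2 = ⊥}

/-- The pure tensor `a ⊗ b`. -/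
def pureTensor (a : A) (b : B) : Set (A × B) :=
  nabla A B ∪ {p | p.1 ≤ a ∧ p.2 ≤ b}

/-- The bi-ideal generated by a subset `X` of `A × B`. -/
def biGen (X : Set (A × B)) : Set (A × B) := ⋂₀ {K | IsBiIdeal K ∧ X ⊆ K}

/-- The join of two bi-ideals in the lattice of bi-ideals. -/
def biSup (I J : Set (A × B)) : Set (A × B) := biGen (I ∪ J)

/-- Elements of the tensor product `A ⊗ B`: the compact (finitely generated) bi-ideals. -/
def IsTensorElt (I : Set (A × B)) : Prop := ∃ S : Finset (A × B), I = biGen ↑S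

/-- An L-homomorphism of join-semilattices with zero. -/
def IsLHom {A B : Type*} [SemilatticeSup A] [OrderBot A] [SemilatticeSup B] [OrderBot B]
    (f : A → B) : Prop :=
  f ⊥ = ⊥ ∧ (∀ a₀ a₁ : A, f (a₀ ⊔ a₁) = f a₀ ⊔ f a₁) ∧
  (∀ a₀ a₁ : A, ∀ b : B, b ≤ f a₀ → b ≤ f a₁ → ∃ x : A, x ≤ a₀ ∧ x ≤ a₁ ∧ b ≤ f x)

/-- The image map on bi-ideals induced by `f` and `g`:
`h(I) = ∇ ∪ { ⟨u,v⟩ : ∃ ⟨x,y⟩ ∈ I, u ≤ f x, v ≤ g y }`. -/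
def hmap {A A' B B' : Type*} [SemilatticeSup A] [OrderBot A] [SemilatticeSup A']
    [OrderBot A'] [SemilatticeSup B] [OrderBot B] [SemilatticeSup B'] [OrderBot B']
    (f : A → A') (g : B → B') (I : Set (A × B)) : Set (A' × B') :=
  nabla A' B' ∪ {p | ∃ q ∈ I, p.1 ≤ f q.1 ∧ p.2 ≤ g q.2}

theorem IsLHom.monotone {f : A → B} (hf : IsLHom f) : Monotone f := fun a b hab => by
  rw [← sup_eq_right.2 hab, hf.2.1]
  exact le_sup_left

theorem IsBiIdeal.preimage_swap {I : Set (A × B)} (hI : IsBiIdeal I) :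
    IsBiIdeal (Prod.swap ⁻¹' I) :=
  ⟨fun _ _ hle hp => hI.1 (Prod.swap_le_swap.2 hle) hp, hI.2.2.1, hI.2.1,
    fun a₀ a₁ b => hI.2.2.2.2 b a₀ a₁, fun a b₀ b₁ => hI.2.2.2.1 b₀ b₁ a⟩

theorem IsBiIdeal.exists_sup_fst_mem {B' : Type*} [SemilatticeSup B'] [OrderBot B']
    {g : B → B'} (hg : IsLHom g) {I : Set (A × B)} (hI : IsBiIdeal I) {x₀ x₁ : A} {y₀ y₁ : B}
    {b : B'} (h₀ : (x₀, y₀) ∈ I) (h₁ : (x₁, y₁) ∈ I) (hb₀ : b ≤ g y₀) (hb₁ : b ≤ g y₁) :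
    ∃ y, (x₀ ⊔ x₁, y) ∈ I ∧ b ≤ g y := by
  obtain ⟨y, hy₀, hy₁, hby⟩ := hg.2.2 y₀ y₁ b hb₀ hb₁
  have hy₀I : (x₀, y) ∈ I := hI.1 (Prod.mk_le_mk.2 ⟨le_rfl, hy₀⟩) h₀
  have hy₁I : (x₁, y) ∈ I := hI.1 (Prod.mk_le_mk.2 ⟨le_rfl, hy₁⟩) h₁
  exact ⟨y, hI.2.2.2.1 x₀ x₁ y hy₀I hy₁I, hby⟩

theorem isLowerSet_nabla : IsLowerSet (nabla A B) := by
  rintro ⟨a, b⟩ ⟨a', b'⟩ ⟨ha, hb⟩ (h | h)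
  · exact Or.inl (le_bot_iff.1 (h ▸ ha))
  · exact Or.inr (le_bot_iff.1 (h ▸ hb))

section hmap

variable {A' B' : Type*} [SemilatticeSup A'] [OrderBot A'] [SemilatticeSup B'] [OrderBot B']

theorem isLowerSet_hmap (f : A → A') (g : B → B') (I : Set (A × B)) :
    IsLowerSet (hmap f g I) :=
  isLowerSet_nabla.union fun _ _ hle ⟨q, hq, h₁, h₂⟩ => ⟨q, hq, hle.1.trans h₁, hle.2.trans h₂⟩

theorem preimage_swap_hmap (f : A → A') (g : B → B') (I : Set (A × B)) :
    Prod.swap ⁻¹' hmap f g I = hmap g f (Prod.swap ⁻¹' I) := by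
  ext ⟨v, u⟩
  simp only [hmap, nabla, Set.mem_preimage, Set.mem_union, Set.mem_ofPred_eq, Prod.exists,
    Prod.swap_prod_mk]
  rw [or_comm (a := u = ⊥), exists_comm]
  simp only [and_comm (a := u ≤ _)]

theorem sup_fst_mem_hmap {f : A → A'} {g : B → B'} (hf : Monotone f) (hg : IsLHom g)
    {I : Set (A × B)} (hI : IsBiIdeal I) {a₀ a₁ : A'} {b : B'}
    (h₀ : (a₀, b) ∈ hmap f g I) (h₁ : (a₁, b) ∈ hmap f g I) : (a₀ ⊔ a₁, b) ∈ hmap f g I := by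
  rcases h₀ with (ha₀ | hb) | ⟨⟨x₀, y₀⟩, hq₀, ha₀, hb₀⟩
  · rwa [show a₀ = ⊥ from ha₀, bot_sup_eq]
  · exact Or.inl (Or.inr hb)
  rcases h₁ with (ha₁ | hb) | ⟨⟨x₁, y₁⟩, hq₁, ha₁, hb₁⟩
  · rw [show a₁ = ⊥ from ha₁, sup_bot_eq]
    exact Or.inr ⟨_, hq₀, ha₀, hb₀⟩
  · exact Or.inl (Or.inr hb)
  obtain ⟨y, hy, hby⟩ := hI.exists_sup_fst_mem hg hq₀ hq₁ hb₀ hb₁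
  exact Or.inr ⟨(x₀ ⊔ x₁, y), hy,
    sup_le (ha₀.trans (hf le_sup_left)) (ha₁.trans (hf le_sup_right)), hby⟩

theorem sup_snd_mem_hmap {f : A → A'} {g : B → B'} (hf : IsLHom f) (hg : Monotone g)
    {I : Set (A × B)} (hI : IsBiIdeal I) {a : A'} {b₀ b₁ : B'}
    (h₀ : (a, b₀) ∈ hmap f g I) (h₁ : (a, b₁) ∈ hmap f g I) : (a, b₀ ⊔ b₁) ∈ hmap f g I := by
  have key := sup_fst_mem_hmap hg hf hI.preimage_swap (a₀ := b₀) (a₁ := b₁) (b := a)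
    (by rw [← preimage_swap_hmap]; exact h₀) (by rw [← preimage_swap_hmap]; exact h₁)
  rwa [← preimage_swap_hmap] at key

end hmap

/-- The image of a bi-ideal under the map induced by L-homomorphisms is a bi-ideal. -/
theorem hmap_isBiIdeal {A A' B B' : Type*} [SemilatticeSup A] [OrderBot A]
    [SemilatticeSup A'] [OrderBot A'] [SemilatticeSup B] [OrderBot B]
    [SemilatticeSup B'] [OrderBot B'] (f : A → A') (g : B → B')
    (hf : IsLHom f) (hg : IsLHom g) (I : Set (A × B)) (hI : IsBiIdeal I) :
    IsBiIdeal (hmap f g I) :=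
  ⟨isLowerSet_hmap f g I, fun _ => Or.inl (Or.inr rfl), fun _ => Or.inl (Or.inl rfl),
    fun _ _ _ => sup_fst_mem_hmap hf.monotone hg hI,
    fun _ _ _ => sup_snd_mem_hmap hf hg.monotone hI⟩
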